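/- Let G be a connected simple graph containing a set T of false twins that are not true twins and not simplicial. Then every minimum-size geodetic set of G contains at most four vertices of T. -/

import Mathlib

def simplicialVertex {V : Type*} (G : SimpleGraph V) (v : V) : Prop :=
  ∀ x ∈ G.neighborSet v, ∀ y ∈ G.neighborSet v, x ≠ y → G.Adj x y

def geodeticSet {V : Type*} (G : SimpleGraph V) (S : Set V) : Prop :=
  ∀ u : V, ∃ s₁ ∈ S, ∃ s₂ ∈ S, G.dist s₁ u + G.dist u s₂ = G.dist s₁ s₂

/-!
If `S` contains at least five vertices of `T`, replace `S ∩ T` by two twins `t₁, t₂ ∈ T` together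
with two non-adjacent common neighbours `x, y` of `T`, which exist because `T` is not simplicial.
The new set is still geodetic and strictly smaller: every twin lies on the geodesic `x - t - y`;
since twins are equidistant from all other vertices, a geodesic from a twin to a vertex outside `T`
may start at `t₁` instead; and a vertex on a geodesic between two twins is a common neighbour of
`T`, hence lies on the geodesic `t₁ - u - t₂`.
-/

namespace SimpleGraph

variable {V : Type*} {G : SimpleGraph V} {a b u w x y : V}

theorem Adj.of_neighborSet_eq (h : G.neighborSet a = G.neighborSet b) (hu : G.Adj a u) :
    G.Adj b u :=
  show u ∈ G.neighborSet b from h ▸ hu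

theorem not_adj_of_neighborSet_eq (h : G.neighborSet a = G.neighborSet b) : ¬G.Adj a b :=
  fun hab => G.loopless.irrefl b (hab.of_neighborSet_eq h)

theorem dist_eq_two_of_adj_of_adj (hab : a ≠ b) (hn : ¬G.Adj a b) (ha : G.Adj a w)
    (hb : G.Adj w b) : G.dist a b = 2 :=
  le_antisymm (G.dist_le (.cons ha (.cons hb .nil)))
    ((ha.reachable.trans hb.reachable).one_lt_dist_of_ne_of_not_adj hab hn)

theorem dist_add_dist_eq_of_adj_of_adj (hxy : x ≠ y) (hn : ¬G.Adj x y) (hx : G.Adj x u)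
    (hy : G.Adj u y) : G.dist x u + G.dist u y = G.dist x y := by
  rw [dist_eq_one_iff_adj.mpr hx, dist_eq_one_iff_adj.mpr hy,
    dist_eq_two_of_adj_of_adj hxy hn hx hy]

theorem Connected.dist_le_of_neighborSet_eq (hG : G.Connected)
    (h : G.neighborSet a = G.neighborSet b) (hua : u ≠ a) : G.dist b u ≤ G.dist a u := by
  obtain ⟨p, hp⟩ := hG.exists_walk_length_eq_dist a u
  cases p with
  | nil => exact absurd rfl hua
  | cons hadj q =>
    calc G.dist b u ≤ (Walk.cons (hadj.of_neighborSet_eq h) q).length :=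
          G.dist_le _
      _ = G.dist a u := hp

theorem Connected.dist_eq_of_neighborSet_eq (hG : G.Connected)
    (h : G.neighborSet a = G.neighborSet b) (hua : u ≠ a) (hub : u ≠ b) :
    G.dist a u = G.dist b u :=
  le_antisymm (hG.dist_le_of_neighborSet_eq h.symm hub) (hG.dist_le_of_neighborSet_eq h hua)

/-- Between two twins `a, b` with a common neighbour the distance is at most `2`, so a vertex
`u ∉ {a, b}` on a geodesic between them is at distance `1` from both. -/
theorem Connected.adj_of_dist_add_dist_eq_of_neighborSet_eq (hG : G.Connected)
    (h : G.neighborSet a = G.neighborSet b) (hw : G.Adj a w) (hua : u ≠ a) (hub : u ≠ b)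
    (hd : G.dist a u + G.dist u b = G.dist a b) : G.Adj a u := by
  have hwb : G.Adj w b := (hw.of_neighborSet_eq h).symm
  have hab : G.dist a b ≤ 2 := G.dist_le (.cons hw (.cons hwb .nil))
  have hba : G.dist u b = G.dist a u := by
    rw [dist_comm, hG.dist_eq_of_neighborSet_eq h hua hub]
  have hpos : 0 < G.dist a u := hG.pos_dist_of_ne hua.symm
  exact dist_eq_one_iff_adj.mp (by omega)

end SimpleGraph

open SimpleGraph

theorem exists_adj_adj_not_adj_of_not_simplicialVertex {V : Type*} {G : SimpleGraph V} {v : V}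
    (h : ¬simplicialVertex G v) : ∃ x y, G.Adj v x ∧ G.Adj v y ∧ x ≠ y ∧ ¬G.Adj x y := by
  simp only [simplicialVertex, not_forall] at h
  obtain ⟨x, hx, y, hy, hxy, hn⟩ := h
  exact ⟨x, y, hx, hy, hxy, hn⟩

theorem geodeticSet_sdiff_union {V : Type*} {G : SimpleGraph V} (hG : G.Connected)
    {S T : Set V} (htwin : ∀ a ∈ T, ∀ b ∈ T, G.neighborSet a = G.neighborSet b)
    {t₁ t₂ x y : V} (ht₁ : t₁ ∈ T) (ht₂ : t₂ ∈ T) (ht : t₁ ≠ t₂)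
    (hx : ∀ t ∈ T, G.Adj t x) (hy : ∀ t ∈ T, G.Adj t y) (hxy : x ≠ y) (hn : ¬G.Adj x y)
    (hS : geodeticSet G S) : geodeticSet G (S \ T ∪ {t₁, t₂, x, y}) := by
  have twin_dist {s t v : V} (hs : s ∈ T) (ht' : t ∈ T) (hv : v ∉ T) :
      G.dist s v = G.dist t v :=
    hG.dist_eq_of_neighborSet_eq (htwin s hs t ht') (ne_of_mem_of_not_mem hs hv).symm
      (ne_of_mem_of_not_mem ht' hv).symm
  intro u
  by_cases huT : u ∈ T
  · exact ⟨x, by simp, y, by simp,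
      dist_add_dist_eq_of_adj_of_adj hxy hn (hx u huT).symm (hy u huT)⟩
  obtain ⟨s₁, hs₁, s₂, hs₂, hd⟩ := hS u
  by_cases h₁ : s₁ ∈ T <;> by_cases h₂ : s₂ ∈ T
  · have hu : G.Adj s₁ u :=
      hG.adj_of_dist_add_dist_eq_of_neighborSet_eq (htwin s₁ h₁ s₂ h₂) (hx s₁ h₁)
        (ne_of_mem_of_not_mem h₁ huT).symm (ne_of_mem_of_not_mem h₂ huT).symm hd
    refine ⟨t₁, by simp, t₂, by simp, dist_add_dist_eq_of_adj_of_adj ht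
      (not_adj_of_neighborSet_eq (htwin t₁ ht₁ t₂ ht₂)) ?_ ?_⟩
    · exact hu.of_neighborSet_eq (htwin s₁ h₁ t₁ ht₁)
    · exact (hu.of_neighborSet_eq (htwin s₁ h₁ t₂ ht₂)).symm
  · refine ⟨t₁, by simp, s₂, Or.inl ⟨hs₂, h₂⟩, ?_⟩
    rwa [← twin_dist h₁ ht₁ huT, ← twin_dist h₁ ht₁ h₂]
  · refine ⟨s₁, Or.inl ⟨hs₁, h₁⟩, t₁, by simp, ?_⟩
    have e₁ : G.dist u s₂ = G.dist u t₁ := by rw [dist_comm, twin_dist h₂ ht₁ huT, dist_comm]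
    have e₂ : G.dist s₁ s₂ = G.dist s₁ t₁ := by rw [dist_comm, twin_dist h₂ ht₁ h₁, dist_comm]
    rwa [← e₁, ← e₂]
  · exact ⟨s₁, Or.inl ⟨hs₁, h₁⟩, s₂, Or.inl ⟨hs₂, h₂⟩, hd⟩

theorem stmt_9_general {V : Type*} [Fintype V] [DecidableEq V]
    (G : SimpleGraph V) (hG : G.Connected)
    (T : Finset V)
    (htwin : ∀ a ∈ T, ∀ b ∈ T, G.neighborSet a = G.neighborSet b)
    (hns : ∀ t ∈ T, ¬ simplicialVertex G t)
    (S : Finset V) (hS : geodeticSet G ↑S)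
    (hmin : ∀ S' : Finset V, geodeticSet G ↑S' → S.card ≤ S'.card) :
    (S ∩ T).card ≤ 4 := by
  by_contra! hcard
  obtain ⟨t₁, ht₁, t₂, ht₂, ht⟩ := Finset.one_lt_card.mp (by omega : 1 < (S ∩ T).card)
  have ht₁T := (Finset.mem_inter.mp ht₁).2
  have ht₂T := (Finset.mem_inter.mp ht₂).2
  obtain ⟨x, y, hx, hy, hxy, hn⟩ :=
    exists_adj_adj_not_adj_of_not_simplicialVertex (hns t₁ ht₁T)
  have hxT : ∀ t ∈ T, G.Adj t x := fun t ht => hx.of_neighborSet_eq (htwin t₁ ht₁T t ht)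
  have hyT : ∀ t ∈ T, G.Adj t y := fun t ht => hy.of_neighborSet_eq (htwin t₁ ht₁T t ht)
  have hgeo : geodeticSet G ↑(S \ T ∪ {t₁, t₂, x, y}) := by
    push_cast
    exact geodeticSet_sdiff_union hG htwin ht₁T ht₂T ht hxT hyT hxy hn hS
  have hle := (hmin _ hgeo).trans (Finset.card_union_le _ _)
  have hsplit := Finset.card_sdiff_add_card_inter S T
  have hfour := Finset.card_le_four (a := t₁) (b := t₂) (c := x) (d := y)
  omega

theorem stmt_9 {V : Type*} [Fintype V] [DecidableEq V]
    (G : SimpleGraph V) (hG : G.Connected)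
    (T : Finset V)
    (htwin : ∀ a ∈ T, ∀ b ∈ T, G.neighborSet a = G.neighborSet b)
    (hnadj : ∀ a ∈ T, ∀ b ∈ T, ¬ G.Adj a b)
    (hns : ∀ t ∈ T, ¬ simplicialVertex G t)
    (S : Finset V) (hS : geodeticSet G ↑S)
    (hmin : ∀ S' : Finset V, geodeticSet G ↑S' → S.card ≤ S'.card) :
    (S ∩ T).card ≤ 4 :=
  stmt_9_general G hG T htwin hns S hS hmin
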